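/- arXiv:math/9807133 — 2 statements merged into one kernel-verified Lean document; each statement's English description precedes it below -/
import Mathlib

section
/- For a 3×3 Hermitian quaternionic matrix A = [[p, a, b̄],[ā, m, c],[b, c̄, n]], the quantity det A := pmn + b(ac) + conj(b(ac)) − n|a|² − m|b|² − p|c|² is real, and A satisfies the characteristic equation A³ − (tr A)·A² + σ(A)·A − (det A)·I = 0, where powers are Jordan powers: A² := A∘A and A³ := A²∘A with A∘B := (1/2)(AB+BA). -/
/-- The Jordan product of two matrices. -/
noncomputable def jordan {k : ℕ} (A B : Matrix (Fin k) (Fin k) (Quaternion ℝ)) :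
    Matrix (Fin k) (Fin k) (Quaternion ℝ) :=
  (1 / 2 : ℝ) • (A * B + B * A)

lemma fin3_mk_zero (h : 0 < 3) : (⟨0, h⟩ : Fin 3) = 0 := rfl
lemma fin3_mk_one (h : 1 < 3) : (⟨1, h⟩ : Fin 3) = 1 := rfl
lemma fin3_mk_two (h : 2 < 3) : (⟨2, h⟩ : Fin 3) = 2 := rfl

lemma jordan_self_comm {k : ℕ} (X Y : Matrix (Fin k) (Fin k) (Quaternion ℝ))
    (h : X * Y = Y * X) : jordan X Y = X * Y := by
  unfold jordan
  rw [h, ← two_smul ℝ (Y * X), smul_smul]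
  norm_num [h]

set_option maxHeartbeats 2000000 in
theorem quaternion_jordan_characteristic_equation (p m n : ℝ) (a b c : Quaternion ℝ) :
    let A : Matrix (Fin 3) (Fin 3) (Quaternion ℝ) :=
      !![(p : Quaternion ℝ), a, star b; star a, (m : Quaternion ℝ), c; b, star c, (n : Quaternion ℝ)]
    let A2 := jordan A A
    let A3 := jordan A2 A
    let σ : Quaternion ℝ := (1 / 2 : ℝ) • ((Matrix.trace A) ^ 2 - Matrix.trace A2)
    let detA : ℝ := p * m * n + 2 * (b * (a * c)).re
      - n * Quaternion.normSq a - m * Quaternion.normSq b - p * Quaternion.normSq c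
    (b * (a * c) + star (b * (a * c)) = ((2 * (b * (a * c)).re : ℝ) : Quaternion ℝ)) ∧
    A3 - Matrix.trace A • A2 + σ • A - (detA : Quaternion ℝ) • (1 : Matrix (Fin 3) (Fin 3) (Quaternion ℝ)) = 0 := by
  intro A A2 A3 σ detA
  refine ⟨Quaternion.self_add_star' _, ?_⟩
  have hA2 : A2 = A * A := jordan_self_comm A A rfl
  have hA3 : A3 = A * A * A := by
    show jordan A2 A = _
    rw [hA2, jordan_self_comm (A * A) A (by rw [mul_assoc])]
  have ht : Matrix.trace A = ((p + m + n : ℝ) : Quaternion ℝ) := by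
    simp [A, Matrix.trace_fin_three]
    try (push_cast; ring)
  have hσ : σ = ((p * m + p * n + m * n - Quaternion.normSq a - Quaternion.normSq b
      - Quaternion.normSq c : ℝ) : Quaternion ℝ) := by
    show (1 / 2 : ℝ) • ((Matrix.trace A) ^ 2 - Matrix.trace A2) = _
    rw [hA2, ht]
    have htr2 : Matrix.trace (A * A) = ((p ^ 2 + m ^ 2 + n ^ 2 + 2 * Quaternion.normSq a
        + 2 * Quaternion.normSq b + 2 * Quaternion.normSq c : ℝ) : Quaternion ℝ) := by
      simp [A, Matrix.trace_fin_three, Matrix.mul_apply, Fin.sum_univ_three,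
        Quaternion.self_mul_star, Quaternion.star_mul_self]
      apply Quaternion.ext <;> simp [pow_two, Quaternion.re_mul] <;> ring
    rw [htr2]
    apply Quaternion.ext <;>
      simp [pow_two, Quaternion.re_mul, Quaternion.imI_mul, Quaternion.imJ_mul,
        Quaternion.imK_mul] <;> ring
  rw [hA3, hA2, ht, hσ]
  ext i j
  all_goals fin_cases i <;> fin_cases j <;>
    simp only [A, Matrix.one_fin_three, Matrix.mul_fin_three, Matrix.sub_apply, Matrix.add_apply, Matrix.smul_apply,
      Matrix.zero_apply, Matrix.cons_val', Matrix.cons_val_zero,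
      Matrix.cons_val_one, Matrix.head_cons, Matrix.head_fin_const, Matrix.empty_val',
      Matrix.cons_val_fin_one, Matrix.tail_cons, fin3_mk_zero, fin3_mk_one, fin3_mk_two,
      Matrix.of_apply, Matrix.cons_val_two, smul_eq_mul, if_true, if_false,
      Fin.zero_eta, Fin.mk_one] <;>
    (simp only [detA, Quaternion.normSq_def', pow_two, Quaternion.re_mul,
        Quaternion.imI_mul, Quaternion.imJ_mul, Quaternion.imK_mul,
        Quaternion.re_add, Quaternion.imI_add, Quaternion.imJ_add, Quaternion.imK_add,
        Quaternion.re_sub, Quaternion.imI_sub, Quaternion.imJ_sub, Quaternion.imK_sub,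
        Quaternion.re_neg, Quaternion.imI_neg, Quaternion.imJ_neg, Quaternion.imK_neg,
        Quaternion.re_star, Quaternion.imI_star, Quaternion.imJ_star, Quaternion.imK_star,
        Quaternion.re_coe, Quaternion.imI_coe, Quaternion.imJ_coe, Quaternion.imK_coe,
        Quaternion.re_one, Quaternion.imI_one, Quaternion.imJ_one, Quaternion.imK_one,
        Quaternion.re_zero, Quaternion.imI_zero, Quaternion.imJ_zero, Quaternion.imK_zero] <;>
      ring)
end

section
/- Let A = [[p, a, b̄],[ā, m, c],[b, c̄, n]] be a 3×3 Hermitian quaternionic matrix and suppose A v = λ v with λ real and v = (x, y, z)ᵀ. Then (λ³ − (tr A)λ² + σ(A)λ − det A)·z = b(a(cz)) + c̄(ā(b̄z)) − (b(ac) + (c̄ā)b̄)z, and in particular (since quaternions associate) λ satisfies the characteristic equation λ³ − (tr A)λ² + σ(A)λ − det A = 0 whenever v ≠ 0 with z ≠ 0. -/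
/-!
Write the eigenvector equations as `(λ - p) x = a y + b̄ z`, `(λ - m) y = ā x + c z` and
`(λ - n) z = b x + c̄ y`. Since real scalars are central and `a ā = ā a = |a|²`, the first two
can be solved for `x` and `y` up to the factor `D = (λ - m)(λ - p) - |a|²`, and substituting into
the third gives `D (λ - n) z` in terms of `z` alone. The constant part `b(ac) + (c̄ā)b̄` is
`2 Re(b(ac))`, being a quaternion plus its conjugate, and comparing coefficients yields the
characteristic polynomial. By associativity the right-hand side vanishes, so `z ≠ 0` forces
the characteristic equation.
-/

open Quaternion

namespace Quaternion

variable {R : Type*} [CommRing R]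

theorem coe_mul_mul_left_comm (r : R) (q w : ℍ[R]) : (r : ℍ[R]) * (q * w) = q * (r * w) := by
  rw [← mul_assoc, coe_commutes, mul_assoc]

theorem mul_eq_of_hermitian_system₂ {r s : R} {a u v x y : ℍ[R]}
    (hx : (r : ℍ[R]) * x = a * y + u) (hy : (s : ℍ[R]) * y = star a * x + v) :
    ((s * r - normSq a : R) : ℍ[R]) * x = a * v + (s : ℍ[R]) * u := by
  have h : (s : ℍ[R]) * ((r : ℍ[R]) * x)
      = ((normSq a : R) : ℍ[R]) * x + (a * v + (s : ℍ[R]) * u) := by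
    rw [hx, mul_add, coe_mul_mul_left_comm, hy, mul_add, ← mul_assoc a, self_mul_star]
    abel
  rw [coe_sub, coe_mul, sub_mul, mul_assoc, h]
  abel

theorem rows_of_mulVec_eq_smul {p m n lam : R} {a b c x y z : ℍ[R]}
    (h : (!![(p : ℍ[R]), a, star b; star a, (m : ℍ[R]), c; b, star c, (n : ℍ[R])]).mulVec
        ![x, y, z] = (lam : ℍ[R]) • ![x, y, z]) :
    ((lam - p : R) : ℍ[R]) * x = a * y + star b * z ∧
      ((lam - m : R) : ℍ[R]) * y = star a * x + c * z ∧
      ((lam - n : R) : ℍ[R]) * z = b * x + star c * y := by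
  have e0 := congr_fun h 0
  have e1 := congr_fun h 1
  have e2 := congr_fun h 2
  simp only [Matrix.mulVec, dotProduct, Fin.sum_univ_three, Matrix.of_apply, Matrix.cons_val',
    Matrix.cons_val_zero, Matrix.cons_val_one, Matrix.cons_val_two, Matrix.cons_val_fin_one,
    Matrix.head_cons, Matrix.tail_cons, Matrix.head_fin_const, Matrix.empty_val', Pi.smul_apply,
    smul_eq_mul] at e0 e1 e2
  refine ⟨?_, ?_, ?_⟩ <;> rw [coe_sub, sub_mul]
  · rw [← e0]; abel
  · rw [← e1]; abel
  · rw [← e2]; abel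

theorem mul_eq_of_hermitian_system₃ {p m n lam : R} {a b c x y z : ℍ[R]}
    (hx : ((lam - p : R) : ℍ[R]) * x = a * y + star b * z)
    (hy : ((lam - m : R) : ℍ[R]) * y = star a * x + c * z)
    (hz : ((lam - n : R) : ℍ[R]) * z = b * x + star c * y) :
    ((((lam - m) * (lam - p) - normSq a) * (lam - n)
        - ((lam - m) * normSq b + (lam - p) * normSq c) : R) : ℍ[R]) * z
      = b * (a * (c * z)) + star c * (star a * (star b * z)) := by
  set D := (lam - m) * (lam - p) - normSq a
  have hDx : (D : ℍ[R]) * x = a * (c * z) + ((lam - m : R) : ℍ[R]) * (star b * z) :=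
    mul_eq_of_hermitian_system₂ hx hy
  have hDy : (D : ℍ[R]) * y = star a * (star b * z) + ((lam - p : R) : ℍ[R]) * (c * z) := by
    have := mul_eq_of_hermitian_system₂ hy (by rwa [star_star])
    rwa [normSq_star, mul_comm] at this
  have hDz : (D : ℍ[R]) * (((lam - n : R) : ℍ[R]) * z) = b * (D * x) + star c * (D * y) := by
    rw [hz, mul_add, coe_mul_mul_left_comm, coe_mul_mul_left_comm]
  rw [coe_sub, sub_mul, coe_mul, mul_assoc, hDz, hDx, hDy, mul_add, mul_add,
    ← coe_mul_mul_left_comm _ b, ← coe_mul_mul_left_comm _ (star c), ← mul_assoc b (star b),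
    self_mul_star, ← mul_assoc (star c) c, star_mul_self]
  push_cast
  noncomm_ring

theorem mul_mul_add_star_mul_mul (a b c : ℍ[R]) :
    b * (a * c) + star c * star a * star b = ((2 * (b * (a * c)).re : R) : ℍ[R]) := by
  rw [← self_add_star', star_mul, star_mul, mul_assoc]

end Quaternion

theorem quaternion_real_eigenvalue_char_eq (p m n : ℝ) (a b c : Quaternion ℝ)
    (lam : ℝ) (x y z : Quaternion ℝ)
    (h : (!![(p : Quaternion ℝ), a, star b;
             star a, (m : Quaternion ℝ), c;
             b, star c, (n : Quaternion ℝ)]).mulVec ![x, y, z]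
          = (lam : Quaternion ℝ) • ![x, y, z]) :
    let σ : ℝ := p * m + p * n + m * n
      - Quaternion.normSq a - Quaternion.normSq b - Quaternion.normSq c
    let detA : ℝ := p * m * n + 2 * (b * (a * c)).re
      - n * Quaternion.normSq a - m * Quaternion.normSq b - p * Quaternion.normSq c
    (((lam ^ 3 - (p + m + n) * lam ^ 2 + σ * lam - detA : ℝ) : Quaternion ℝ) * z
        = b * (a * (c * z)) + star c * (star a * (star b * z))
          - (b * (a * c) + (star c * star a) * star b) * z) ∧
    (z ≠ 0 → lam ^ 3 - (p + m + n) * lam ^ 2 + σ * lam - detA = 0) := by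
  intro σ detA
  obtain ⟨hx, hy, hz⟩ := rows_of_mulVec_eq_smul h
  have hchar : lam ^ 3 - (p + m + n) * lam ^ 2 + σ * lam - detA
      = ((lam - m) * (lam - p) - normSq a) * (lam - n)
        - ((lam - m) * normSq b + (lam - p) * normSq c) - 2 * (b * (a * c)).re := by
    simp only [σ, detA]
    ring
  have hmul : ((lam ^ 3 - (p + m + n) * lam ^ 2 + σ * lam - detA : ℝ) : ℍ[ℝ]) * z
      = b * (a * (c * z)) + star c * (star a * (star b * z))
        - (b * (a * c) + (star c * star a) * star b) * z := by
    rw [hchar, coe_sub, sub_mul, mul_eq_of_hermitian_system₃ hx hy hz, mul_mul_add_star_mul_mul]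
  refine ⟨hmul, fun hz0 => ?_⟩
  have hassoc : b * (a * (c * z)) + star c * (star a * (star b * z))
      - (b * (a * c) + (star c * star a) * star b) * z = 0 := by
    noncomm_ring
  rw [hassoc, mul_eq_zero, ← coe_zero, coe_inj] at hmul
  exact hmul.resolve_right hz0
end
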